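/- arXiv:1606.05784 — 2 statements merged into one kernel-verified Lean document; each statement's English description precedes it below -/
import Mathlib

section
/- Let α > 0 be real and let ν be a real number with ν > max(0, ln(α·λ)·F*). Then the probability that proportional selection returns an index i with F_i = F_0 is at least 1/(1 + 1/α) = α/(α + 1). -/
/-!
Split the total weight into the indices attaining `F₀` and the rest. The first part is at least
`F₀^ν`; each of the at most `λ` others has `F_i ≤ F₀ - 1`, and
`(F₀ - 1)^ν = F₀^ν (1 - 1/F₀)^ν ≤ F₀^ν e^{-ν/F₀}`. Since `ν/F₀ ≥ ν/F* > ln(αλ)`, the rest weighs at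
most `F₀^ν/α`, i.e. at most a `1/α` fraction of the first part.
-/

open Finset

lemma sub_one_rpow_le_rpow_mul_exp {x ν : ℝ} (hx : 1 ≤ x) (hν : 0 ≤ ν) :
    (x - 1) ^ ν ≤ x ^ ν * Real.exp (-(ν / x)) := by
  have hx0 : 0 < x := one_pos.trans_le hx
  have hbase : x - 1 ≤ x * Real.exp (-(1 / x)) := by
    have hexp := Real.add_one_le_exp (-(1 / x))
    calc x - 1 = x * (-(1 / x) + 1) := by field_simp; ring
      _ ≤ x * Real.exp (-(1 / x)) := by gcongr
  calc (x - 1) ^ ν ≤ (x * Real.exp (-(1 / x))) ^ ν :=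
        Real.rpow_le_rpow (by linarith) hbase hν
    _ = x ^ ν * Real.exp (-(ν / x)) := by
        rw [Real.mul_rpow hx0.le (Real.exp_pos _).le, ← Real.exp_mul]
        congr 2
        ring

lemma mul_sub_one_rpow_le_rpow_div {α n x ν : ℝ} (hα : 0 < α) (hx : 1 ≤ x)
    (hν : 0 ≤ ν) (hlog : Real.log (α * n) ≤ ν / x) :
    n * (x - 1) ^ ν ≤ x ^ ν / α := by
  have hαn : α * n ≤ Real.exp (ν / x) := Real.le_exp_of_log_le hlog
  have hxν : 0 ≤ x ^ ν := Real.rpow_nonneg (by linarith) ν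
  rw [le_div_iff₀ hα]
  calc n * (x - 1) ^ ν * α = α * n * (x - 1) ^ ν := by ring
    _ ≤ Real.exp (ν / x) * (x ^ ν * Real.exp (-(ν / x))) := by
        gcongr
        exact sub_one_rpow_le_rpow_mul_exp hx hν
    _ = x ^ ν := by rw [mul_left_comm, ← Real.exp_add, add_neg_cancel, Real.exp_zero, mul_one]

lemma sum_filter_ne_rpow_le {ι : Type*} [Fintype ι] (F : ι → ℕ) {M : ℕ} (hM : 1 ≤ M)
    (hle : ∀ i, F i ≤ M) {ν : ℝ} (hν : 0 ≤ ν) :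
    ∑ i ∈ univ.filter (fun i => F i ≠ M), (F i : ℝ) ^ ν ≤
      Fintype.card ι * ((M : ℝ) - 1) ^ ν := by
  have hM1 : (0 : ℝ) ≤ (M : ℝ) - 1 := sub_nonneg.mpr (by exact_mod_cast hM)
  calc ∑ i ∈ univ.filter (fun i => F i ≠ M), (F i : ℝ) ^ ν
        ≤ ∑ _i ∈ univ.filter (fun i => F i ≠ M), ((M : ℝ) - 1) ^ ν := by
        refine sum_le_sum fun i hi => Real.rpow_le_rpow (Nat.cast_nonneg _) ?_ hν
        have hlt : F i < M := (hle i).lt_of_ne (mem_filter.mp hi).2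
        rw [le_sub_iff_add_le]
        exact_mod_cast hlt
    _ ≤ Fintype.card ι * ((M : ℝ) - 1) ^ ν := by
        rw [sum_const, nsmul_eq_mul]
        gcongr
        exact_mod_cast card_filter_le _ _

lemma one_div_one_add_one_div_le_div_add {a c α : ℝ} (ha : 0 < a) (hc : 0 ≤ c) (hα : 0 < α)
    (h : c ≤ a / α) : 1 / (1 + 1 / α) ≤ a / (a + c) := by
  calc 1 / (1 + 1 / α) = a / (a + a / α) := by field_simp
    _ ≤ a / (a + c) := by gcongr

theorem stmt_6_general (lam : ℕ) (hlam : 0 < lam) (F : Fin lam → ℕ)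
    (Fstar : ℕ) (hFle : ∀ i, F i ≤ Fstar)
    (F0 : ℕ) (hF0 : F0 = Finset.univ.sup F) (hF01 : 1 ≤ F0)
    (α ν : ℝ) (hα : 0 < α)
    (hν : max 0 (Real.log (α * lam) * Fstar) < ν) :
    1 / (1 + 1 / α) ≤
      (∑ i ∈ Finset.univ.filter fun i => F i = F0, (F i : ℝ) ^ ν) /
        ∑ j, (F j : ℝ) ^ ν := by
  have hν0 : 0 < ν := (le_max_left _ _).trans_lt hν
  have hF0pos : (0 : ℝ) < F0 := by exact_mod_cast hF01
  have hle : ∀ i, F i ≤ F0 := fun i => hF0 ▸ le_sup (mem_univ i)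
  obtain ⟨i0, -, hi0⟩ := exists_mem_eq_sup univ ⟨⟨0, hlam⟩, mem_univ _⟩ F
  have hlog : Real.log (α * lam) ≤ ν / F0 := by
    rcases le_or_gt (Real.log (α * lam)) 0 with h | h
    · exact h.trans (by positivity)
    · have hF0le : (F0 : ℝ) ≤ Fstar := by exact_mod_cast hF0 ▸ Finset.sup_le fun i _ => hFle i
      rw [le_div_iff₀ hF0pos]
      calc Real.log (α * lam) * F0 ≤ Real.log (α * lam) * Fstar := by gcongr
        _ ≤ ν := ((le_max_right _ _).trans_lt hν).le
  have hmax : (F0 : ℝ) ^ ν ≤ ∑ i ∈ univ.filter fun i => F i = F0, (F i : ℝ) ^ ν := by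
    have hi0' : F i0 = F0 := (hF0.trans hi0).symm
    simpa [hi0'] using single_le_sum (f := fun i => (F i : ℝ) ^ ν)
      (fun i _ => Real.rpow_nonneg (Nat.cast_nonneg _) ν) (mem_filter.mpr ⟨mem_univ i0, hi0'⟩)
  rw [← sum_filter_add_sum_filter_not univ fun i => F i = F0]
  refine one_div_one_add_one_div_le_div_add ((Real.rpow_pos_of_pos hF0pos ν).trans_le hmax)
    (sum_nonneg fun i _ => Real.rpow_nonneg (Nat.cast_nonneg _) ν) hα ?_
  calc ∑ i ∈ univ.filter (fun i => F i ≠ F0), (F i : ℝ) ^ ν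
      ≤ lam * ((F0 : ℝ) - 1) ^ ν := by
        simpa using sum_filter_ne_rpow_le F hF01 hle hν0.le
    _ ≤ (F0 : ℝ) ^ ν / α :=
        mul_sub_one_rpow_le_rpow_div hα (by exact_mod_cast hF01) hν0.le hlog
    _ ≤ _ := by gcongr

/-- Proposition 2: proportional selection with the scaled fitness `f = F^ν`.
If `ν > max(0, ln(α·λ)·F*)`, then the probability
`(∑_{i : F_i = F_0} F_i^ν) / (∑_j F_j^ν)` that the selected index attains the
maximal objective value `F_0` is at least `1/(1 + 1/α)`. -/
theorem stmt_6 (lam : ℕ) (hlam : 0 < lam) (F : Fin lam → ℕ)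
    (Fstar : ℕ) (hFstar : 1 ≤ Fstar) (hFle : ∀ i, F i ≤ Fstar)
    (F0 : ℕ) (hF0 : F0 = Finset.univ.sup F) (hF01 : 1 ≤ F0)
    (α ν : ℝ) (hα : 0 < α)
    (hν : max 0 (Real.log (α * lam) * Fstar) < ν) :
    1 / (1 + 1 / α) ≤
      (∑ i ∈ Finset.univ.filter fun i => F i = F0, (F i : ℝ) ^ ν) /
        ∑ j, (F j : ℝ) ^ ν :=
  stmt_6_general lam hlam F Fstar hFle F0 hF0 hF01 α ν hα hν
end

section
/- Let 1 ≤ K ≤ n/2 and p_m = K/n. Then for all x, y ∈ {0,1}^n with Hamming distance d(x,y) ≤ K, the bitwise mutation operator satisfies Pr(Mut*(y) = x) ≥ (K/(e·n))^K. Equivalently, (K/n)^d · (1 − K/n)^{n−d} ≥ (K/(e·n))^K for every integer d with 0 ≤ d ≤ K. -/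
/-! With `p = K/n` one has `(K/(e n))^K = p^K e^{-K}`. The elementary bound `1 - p ≥ e^{-p/(1-p)}`,
raised to the power `n - K`, gives `(1 - p)^(n - K) ≥ e^{-K}` because `p/(1-p) = K/(n-K)`; so the
claim holds for `d = K`. Lowering `d` trades a factor `p` for a factor `1 - p ≥ p`, which only
increases `p^d (1-p)^(n-d)`. -/

open Real

theorem Real.exp_neg_div_one_sub_le {p : ℝ} (hp : p < 1) : exp (-(p / (1 - p))) ≤ 1 - p := by
  have hq : 0 < 1 - p := by linarith
  have h_inv : (1 + p / (1 - p))⁻¹ = 1 - p := by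
    field_simp
    ring
  have h_pos : 0 < 1 + p / (1 - p) := by rwa [← inv_pos, h_inv]
  calc exp (-(p / (1 - p))) = (exp (p / (1 - p)))⁻¹ := exp_neg _
    _ ≤ (1 + p / (1 - p))⁻¹ := inv_anti₀ h_pos (by linarith [add_one_le_exp (p / (1 - p))])
    _ = 1 - p := h_inv

theorem Real.exp_neg_le_one_sub_div_pow {K n : ℕ} (hKn : K ≤ n) :
    exp (-K) ≤ (1 - (K : ℝ) / n) ^ (n - K) := by
  rcases hKn.lt_or_eq with hlt | rfl
  · have hn : (0 : ℝ) < n := by exact_mod_cast K.zero_le.trans_lt hlt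
    have hKn' : (K : ℝ) < n := by exact_mod_cast hlt
    have hp : (K : ℝ) / n < 1 := (div_lt_one hn).mpr hKn'
    have h_ratio : ((K : ℝ) / n) / (1 - K / n) = K / (n - K : ℕ) := by
      have : (n : ℝ) - K ≠ 0 := by linarith
      rw [Nat.cast_sub hlt.le]
      field_simp
    have h_sub : ((n - K : ℕ) : ℝ) ≠ 0 := by exact_mod_cast (Nat.sub_pos_of_lt hlt).ne'
    calc exp (-K) = exp (-((K / n) / (1 - K / n))) ^ (n - K) := by
          rw [h_ratio, ← exp_nat_mul]
          field_simp
      _ ≤ (1 - (K : ℝ) / n) ^ (n - K) :=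
          pow_le_pow_left₀ (exp_pos _).le (exp_neg_div_one_sub_le hp) _
  · simp

theorem pow_mul_pow_sub_le_pow_mul_pow_sub {R : Type*} [CommSemiring R] [PartialOrder R]
    [IsOrderedRing R] {p q : R} (hp : 0 ≤ p) (hpq : p ≤ q) {d K n : ℕ} (hdK : d ≤ K)
    (hKn : K ≤ n) : p ^ K * q ^ (n - K) ≤ p ^ d * q ^ (n - d) := by
  obtain ⟨j, rfl⟩ := Nat.exists_eq_add_of_le hdK
  rw [show n - d = j + (n - (d + j)) by omega, pow_add, pow_add, mul_assoc]
  gcongr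
  exact pow_nonneg (hp.trans hpq) _

theorem stmt_9_general (n K : ℕ) (hKn : 2 * K ≤ n)
    (x y : Fin n → Bool) (hd : hammingDist x y ≤ K) :
    ((K : ℝ) / (Real.exp 1 * n)) ^ K ≤
        ((K : ℝ) / n) ^ hammingDist x y *
          (1 - (K : ℝ) / n) ^ (n - hammingDist x y) ∧
      ∀ d : ℕ, d ≤ K →
        ((K : ℝ) / (Real.exp 1 * n)) ^ K ≤
          ((K : ℝ) / n) ^ d * (1 - (K : ℝ) / n) ^ (n - d) := by
  suffices h : ∀ d ≤ K,
      ((K : ℝ) / (exp 1 * n)) ^ K ≤ ((K : ℝ) / n) ^ d * (1 - (K : ℝ) / n) ^ (n - d) from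
    ⟨h _ hd, h⟩
  intro d hdK
  set p : ℝ := K / n
  have hp : 0 ≤ p := by positivity
  have hp_half : p ≤ 1 - p := by
    have hKn' : (2 * K : ℝ) ≤ n := by exact_mod_cast hKn
    have : p ≤ 1 / 2 := div_le_of_le_mul₀ (Nat.cast_nonneg n) (by norm_num) (by linarith)
    linarith
  calc ((K : ℝ) / (exp 1 * n)) ^ K = p ^ K * exp (-K) := by
        rw [exp_neg, ← exp_one_pow, mul_comm, ← div_div, div_pow, div_eq_mul_inv]
    _ ≤ p ^ K * (1 - p) ^ (n - K) := by
        gcongr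
        exact exp_neg_le_one_sub_div_pow (by omega)
    _ ≤ p ^ d * (1 - p) ^ (n - d) := pow_mul_pow_sub_le_pow_mul_pow_sub hp hp_half hdK (by omega)

/-- Proposition 3: if `1 ≤ K ≤ n/2` and `p_m = K/n`, then bitwise mutation
transforms `y` into any fixed `x` at Hamming distance at most `K` with
probability `p_m^{d(x,y)}·(1-p_m)^{n-d(x,y)} ≥ (K/(e·n))^K`; equivalently,
`(K/n)^d·(1-K/n)^{n-d} ≥ (K/(e·n))^K` for every `0 ≤ d ≤ K`. -/
theorem stmt_9 (n K : ℕ) (hK : 1 ≤ K) (hKn : 2 * K ≤ n)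
    (x y : Fin n → Bool) (hd : hammingDist x y ≤ K) :
    ((K : ℝ) / (Real.exp 1 * n)) ^ K ≤
        ((K : ℝ) / n) ^ hammingDist x y *
          (1 - (K : ℝ) / n) ^ (n - hammingDist x y) ∧
      ∀ d : ℕ, d ≤ K →
        ((K : ℝ) / (Real.exp 1 * n)) ^ K ≤
          ((K : ℝ) / n) ^ d * (1 - (K : ℝ) / n) ^ (n - d) :=
  stmt_9_general n K hKn x y hd
end
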